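/- arXiv:1910.04109 — 3 statements merged into one kernel-verified Lean document; each statement's English description precedes it below -/
import Mathlib

section
/- Let ρ be a probability measure on ℝ, and for a ∈ {0, 1} let κM(a) : ℝ → Measure ℝ and κL(a) : ℝ × ℝ → Measure ℝ be families of probability measures (Markov kernels) such that for all x, m: ∫ m' dκM(a)(x)(m') = θm0 + θma·a + θmx·x and ∫ l dκL(a)(x, m)(l) = θl0 + θla·a + θlm·m + θlx·x. Define the outcome regression μ(x, a, m, l) = θy0 + θyx·x + θya·a + θym·m + θyl·l. Assume x ↦ x is ρ-integrable, that for ρ-almost-every x the functions m ↦ m and m ↦ ∫ l dκL(0)(x, m)(l) are κM(a)(x)-integrable for a ∈ {0,1}, and that all iterated integrals below are well defined (the integrands are integrable at each stage). Then ∫ (∫ (∫ μ(x, 1, m, l) dκL(0)(x, m)(l)) dκM(1)(x)(m)) dρ(x) − ∫ (∫ (∫ μ(x, 0, m, l) dκL(0)(x, m)(l)) dκM(0)(x)(m)) dρ(x) = θya + θym·θma + θyl·θlm·θma. -/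
open MeasureTheory

/-! Every stage of the g-formula integrates a function that is affine in the variable being
integrated out, so each integral only substitutes the conditional mean of that variable and the
result stays affine in the remaining ones. After integrating out `L` and `M`, both arms are
`C(a) + K·x` with the same slope `K`, so the `X`-integral leaves `C(1) - C(0)`, the closed form. -/

theorem integral_eq_const_add_mul_integral {α : Type*} [MeasurableSpace α] {ν : Measure α}
    [IsProbabilityMeasure ν] {f g : α → ℝ} {c k : ℝ} (hfg : ∀ x, f x = c + k * g x)
    (hf : Integrable f ν) : ∫ x, f x ∂ν = c + k * ∫ x, g x ∂ν := by
  obtain rfl : f = fun x => c + k * g x := funext hfg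
  have hkg : Integrable (fun x => k * g x) ν := integrable_const_add_iff.mp hf
  rw [integral_add (integrable_const c) hkg, integral_const_mul, integral_const]
  simp

theorem pse_linear_sem_closed_form_general
    (θm0 θma θmx θl0 θla θlm θlx θy0 θyx θya θym θyl : ℝ)
    (ρ : Measure ℝ) [IsProbabilityMeasure ρ]
    (κM : Bool → ℝ → Measure ℝ) (hκM : ∀ a x, IsProbabilityMeasure (κM a x))
    (κL : Bool → ℝ × ℝ → Measure ℝ) (hκL : ∀ a xm, IsProbabilityMeasure (κL a xm))
    -- conditional mean of M given A = a, X = x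
    (hMeanM : ∀ (a : Bool) (x : ℝ),
      ∫ m', m' ∂(κM a x) = θm0 + θma * (if a then (1 : ℝ) else 0) + θmx * x)
    -- conditional mean of L given A = a, X = x, M = m
    (hMeanL : ∀ (a : Bool) (x m : ℝ),
      ∫ l, l ∂(κL a (x, m)) = θl0 + θla * (if a then (1 : ℝ) else 0) + θlm * m + θlx * x)
    -- outcome regression
    (μ : ℝ → Bool → ℝ → ℝ → ℝ)
    (hμ : ∀ (x : ℝ) (a : Bool) (m l : ℝ),
      μ x a m l = θy0 + θyx * x + θya * (if a then (1 : ℝ) else 0) + θym * m + θyl * l)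
    -- the iterated integrals are well defined: the integrands are integrable
    -- at each stage
    (hIntL' : ∀ (a : Bool) (x m : ℝ),
      Integrable (fun l => μ x a m l) (κL false (x, m)))
    (hIntM' : ∀ (a : Bool) (x : ℝ),
      Integrable (fun m => ∫ l, μ x a m l ∂(κL false (x, m))) (κM a x))
    (hIntX' : ∀ a : Bool,
      Integrable (fun x => ∫ m, (∫ l, μ x a m l ∂(κL false (x, m))) ∂(κM a x)) ρ) :
    (∫ x, (∫ m, (∫ l, μ x true m l ∂(κL false (x, m))) ∂(κM true x)) ∂ρ)
      - (∫ x, (∫ m, (∫ l, μ x false m l ∂(κL false (x, m))) ∂(κM false x)) ∂ρ)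
      = θya + θym * θma + θyl * θlm * θma := by
  have hL : ∀ a x m, ∫ l, μ x a m l ∂(κL false (x, m))
      = (θy0 + θyl * θl0 + θya * (if a then 1 else 0) + (θyx + θyl * θlx) * x)
        + (θym + θyl * θlm) * m := by
    intro a x m
    rw [integral_eq_const_add_mul_integral (hμ x a m) (hIntL' a x m), hMeanL]
    simp only [Bool.false_eq_true, if_false]
    ring
  have hM : ∀ a x, ∫ m, (∫ l, μ x a m l ∂(κL false (x, m))) ∂(κM a x)
      = (θy0 + θyl * θl0 + θya * (if a then 1 else 0)
          + (θym + θyl * θlm) * (θm0 + θma * (if a then 1 else 0)))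
        + (θyx + θyl * θlx + (θym + θyl * θlm) * θmx) * x := by
    intro a x
    rw [integral_eq_const_add_mul_integral (hL a x) (hIntM' a x), hMeanM]
    ring
  rw [integral_eq_const_add_mul_integral (hM true) (hIntX' true),
    integral_eq_const_add_mul_integral (hM false) (hIntX' false)]
  simp only [if_true, Bool.false_eq_true, if_false]
  ring

/-- Closed form of the path-specific effect under a linear structural equation
model.  `ρ` is the distribution of the baseline covariate `X`; `κM a x` is the
distribution of the mediator `M` given `A = a, X = x`, with conditional mean
`θm0 + θma·a + θmx·x`; `κL a (x, m)` is the distribution of the mediator `L`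
given `A = a, X = x, M = m`, with conditional mean
`θl0 + θla·a + θlm·m + θlx·x`; and the outcome regression is
`μ x a m l = θy0 + θyx·x + θya·a + θym·m + θyl·l`.  The edge g-formula contrast
identifying the PSE of `A` on `Y` along the direct path and the paths through
`M` equals `θya + θym·θma + θyl·θlm·θma`. -/
theorem pse_linear_sem_closed_form
    (θm0 θma θmx θl0 θla θlm θlx θy0 θyx θya θym θyl : ℝ)
    (ρ : Measure ℝ) [IsProbabilityMeasure ρ]
    (κM : Bool → ℝ → Measure ℝ) (hκM : ∀ a x, IsProbabilityMeasure (κM a x))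
    (κL : Bool → ℝ × ℝ → Measure ℝ) (hκL : ∀ a xm, IsProbabilityMeasure (κL a xm))
    -- conditional mean of M given A = a, X = x
    (hMeanM : ∀ (a : Bool) (x : ℝ),
      ∫ m', m' ∂(κM a x) = θm0 + θma * (if a then (1 : ℝ) else 0) + θmx * x)
    -- conditional mean of L given A = a, X = x, M = m
    (hMeanL : ∀ (a : Bool) (x m : ℝ),
      ∫ l, l ∂(κL a (x, m)) = θl0 + θla * (if a then (1 : ℝ) else 0) + θlm * m + θlx * x)
    -- outcome regression
    (μ : ℝ → Bool → ℝ → ℝ → ℝ)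
    (hμ : ∀ (x : ℝ) (a : Bool) (m l : ℝ),
      μ x a m l = θy0 + θyx * x + θya * (if a then (1 : ℝ) else 0) + θym * m + θyl * l)
    -- `x ↦ x` is `ρ`-integrable
    (hIntρ : Integrable (fun x : ℝ => x) ρ)
    -- for ρ-a.e. x, the functions `m ↦ m` and `m ↦ ∫ l ∂κL 0 (x, m)` are
    -- `κM a x`-integrable
    (hIntM : ∀ a : Bool, ∀ᵐ x ∂ρ,
      Integrable (fun m : ℝ => m) (κM a x) ∧
      Integrable (fun m : ℝ => ∫ l, l ∂(κL false (x, m))) (κM a x))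
    -- the iterated integrals are well defined: the integrands are integrable
    -- at each stage
    (hIntL' : ∀ (a : Bool) (x m : ℝ),
      Integrable (fun l => μ x a m l) (κL false (x, m)))
    (hIntM' : ∀ (a : Bool) (x : ℝ),
      Integrable (fun m => ∫ l, μ x a m l ∂(κL false (x, m))) (κM a x))
    (hIntX' : ∀ a : Bool,
      Integrable (fun x => ∫ m, (∫ l, μ x a m l ∂(κL false (x, m))) ∂(κM a x)) ρ) :
    (∫ x, (∫ m, (∫ l, μ x true m l ∂(κL false (x, m))) ∂(κM true x)) ∂ρ)
      - (∫ x, (∫ m, (∫ l, μ x false m l ∂(κL false (x, m))) ∂(κM false x)) ∂ρ)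
      = θya + θym * θma + θyl * θlm * θma :=
  pse_linear_sem_closed_form_general θm0 θma θmx θl0 θla θlm θlx θy0 θyx θya θym θyl ρ κM hκM κL hκL
    hMeanM hMeanL μ hμ hIntL' hIntM' hIntX'
end

section
/- Let n be a positive natural number, m : Fin n → ℝ, and λ ∈ ℝ such that 1 + λ·m(i) > 0 for all i and ∑_{i} m(i)/(1 + λ·m(i)) = 0, and set p(i) = 1/(n·(1 + λ·m(i))). Then for every q : Fin n → ℝ with q(i) > 0 for all i, ∑_{i} q(i) = 1, and ∑_{i} q(i)·m(i) = 0, one has ∑_{i} log q(i) ≤ ∑_{i} log p(i). That is, the weights p(i) maximize the empirical log-likelihood ∑_i log p_i over all strictly positive probability vectors satisfying the moment constraint ∑_i p_i·m(i) = 0. -/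
open Finset Real

/-! Weak Lagrangian duality: `log x ≤ x - 1` applied to `x = q i / p i` bounds
`∑ log q - ∑ log p` by `∑ q i / p i - n`, and since `(p i)⁻¹ = n (1 + λ m i)` is affine
in the constraint functions, `∑ q i / p i = n (∑ q i + λ ∑ q i m i) = n` for every
feasible `q`. -/

theorem sum_log_le_sum_log_of_sum_div_le_card {ι : Type*} (s : Finset ι) {p q : ι → ℝ}
    (hp : ∀ i ∈ s, 0 < p i) (hq : ∀ i ∈ s, 0 < q i) (h : ∑ i ∈ s, q i / p i ≤ #s) :
    ∑ i ∈ s, log (q i) ≤ ∑ i ∈ s, log (p i) := by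
  have hlog : ∀ i ∈ s, log (q i) - log (p i) ≤ q i / p i - 1 := fun i hi => by
    rw [← log_div (hq i hi).ne' (hp i hi).ne']
    exact log_le_sub_one_of_pos (div_pos (hq i hi) (hp i hi))
  have hsum := sum_le_sum hlog
  rw [sum_sub_distrib, sum_sub_distrib, sum_const, nsmul_one] at hsum
  linarith

theorem empirical_likelihood_weights_optimal_general
    (n : ℕ) (hn : 0 < n) (m : Fin n → ℝ) (lam : ℝ)
    (hpos : ∀ i, 0 < 1 + lam * m i)
    (p : Fin n → ℝ) (hp : ∀ i, p i = 1 / (n * (1 + lam * m i))) :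
    ∀ q : Fin n → ℝ, (∀ i, 0 < q i) → (∑ i, q i = 1) → (∑ i, q i * m i = 0) →
      ∑ i, Real.log (q i) ≤ ∑ i, Real.log (p i) := by
  intro q hq hq1 hqm
  have hp_pos : ∀ i, 0 < p i := fun i => by
    rw [hp i]
    have := hpos i
    positivity
  have hratio : ∀ i, q i / p i = n * (q i + lam * (q i * m i)) := fun i => by
    rw [hp i]
    field_simp
  refine sum_log_le_sum_log_of_sum_div_le_card univ (fun i _ => hp_pos i) (fun i _ => hq i) ?_
  simp only [hratio, ← mul_sum, sum_add_distrib, hq1, hqm, card_univ, Fintype.card_fin]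
  simp

/-- Optimality of the Lagrange-multiplier solution of the profile empirical
likelihood problem: the weights `p i = 1 / (n·(1 + λ·m i))`, with `λ` solving
`∑ i, m i / (1 + λ·m i) = 0`, maximize the empirical log-likelihood
`∑ i, log p i` over all strictly positive probability vectors `q` satisfying
the moment constraint `∑ i, q i · m i = 0`. -/
theorem empirical_likelihood_weights_optimal
    (n : ℕ) (hn : 0 < n) (m : Fin n → ℝ) (lam : ℝ)
    (hpos : ∀ i, 0 < 1 + lam * m i)
    (hroot : ∑ i, m i / (1 + lam * m i) = 0)
    (p : Fin n → ℝ) (hp : ∀ i, p i = 1 / (n * (1 + lam * m i))) :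
    ∀ q : Fin n → ℝ, (∀ i, 0 < q i) → (∑ i, q i = 1) → (∑ i, q i * m i = 0) →
      ∑ i, Real.log (q i) ≤ ∑ i, Real.log (p i) :=
  empirical_likelihood_weights_optimal_general n hn m lam hpos p hp
end

section
/- Let n be a positive natural number and m : Fin n → ℝ such that m(i) > 0 for some i and m(j) < 0 for some j. Then there exists a unique λ ∈ ℝ such that 1 + λ·m(i) > 0 for all i and ∑_{i} m(i)/(1 + λ·m(i)) = 0. -/
/-!
On the set of admissible multipliers (all `1 + λ m i > 0`), an interval, each term `m i / (1 + λ m i)`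
is decreasing in `λ`, strictly so when `m i ≠ 0`; this gives uniqueness. For existence, let `M > 0`
be the largest value and `S = ∑ |m i|`: at `λ = 1/S - 1/M ≤ 0` the term of the maximiser equals `S`
while every other term is at least `-|m i|`, so the sum is positive. The symmetry `m ↦ -m`, `λ ↦ -λ`
turns this into an admissible point with negative sum, and the intermediate value theorem finishes.
-/

open Finset

theorem div_one_add_mul_lt_div_one_add_mul {a b x : ℝ} (hx : x ≠ 0) (hab : a < b)
    (ha : 0 < 1 + a * x) (hb : 0 < 1 + b * x) : x / (1 + b * x) < x / (1 + a * x) := by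
  rw [div_lt_div_iff₀ hb ha]
  nlinarith [mul_lt_mul_of_pos_right hab (mul_self_pos.2 hx)]

theorem neg_abs_le_div_one_add_mul {lam x : ℝ} (hlam : lam ≤ 0) (h : 0 < 1 + lam * x) :
    -|x| ≤ x / (1 + lam * x) := by
  rcases le_total 0 x with hx | hx
  · exact (neg_nonpos.2 (abs_nonneg x)).trans (div_nonneg hx h.le)
  · rw [abs_of_nonpos hx, neg_neg, le_div_iff₀ h]
    nlinarith [mul_nonpos_of_nonpos_of_nonneg hlam (mul_self_nonneg x)]

namespace EmpiricalLikelihood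

variable {ι : Type*}

def multiplierDomain (m : ι → ℝ) : Set ℝ := {lam | ∀ i, 0 < 1 + lam * m i}

theorem neg_mem_multiplierDomain_neg {m : ι → ℝ} {lam : ℝ} :
    -lam ∈ multiplierDomain (-m) ↔ lam ∈ multiplierDomain m := by
  simp only [multiplierDomain, Set.mem_ofPred_eq, Pi.neg_apply, neg_mul_neg]

theorem ordConnected_multiplierDomain (m : ι → ℝ) : (multiplierDomain m).OrdConnected := by
  refine ⟨fun a ha b hb x hx i => ?_⟩
  rcases le_total 0 (m i) with h | h
  · nlinarith [ha i, hx.1]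
  · nlinarith [hb i, hx.2]

variable [Fintype ι]

noncomputable def multiplierSum (m : ι → ℝ) (lam : ℝ) : ℝ := ∑ i, m i / (1 + lam * m i)

theorem multiplierSum_neg (m : ι → ℝ) (lam : ℝ) :
    multiplierSum (-m) (-lam) = -multiplierSum m lam := by
  simp [multiplierSum, neg_div, sum_neg_distrib]

theorem continuousOn_multiplierSum (m : ι → ℝ) :
    ContinuousOn (multiplierSum m) (multiplierDomain m) := by
  unfold multiplierSum
  refine continuousOn_finsetSum _ fun i _ => ContinuousOn.div continuousOn_const
    (by fun_prop) fun lam hlam => (hlam i).ne'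

theorem strictAntiOn_multiplierSum {m : ι → ℝ} (hm : ∃ i, m i ≠ 0) :
    StrictAntiOn (multiplierSum m) (multiplierDomain m) := by
  intro a ha b hb hab
  obtain ⟨j, hj⟩ := hm
  refine sum_lt_sum (fun i _ => ?_) ⟨j, mem_univ j, ?_⟩
  · rcases eq_or_ne (m i) 0 with h | h
    · simp [h]
    · exact (div_one_add_mul_lt_div_one_add_mul h hab (ha i) (hb i)).le
  · exact div_one_add_mul_lt_div_one_add_mul hj hab (ha j) (hb j)

theorem exists_mem_multiplierDomain_multiplierSum_pos {m : ι → ℝ} (hpos : ∃ i, 0 < m i) :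
    ∃ lam ∈ multiplierDomain m, 0 < multiplierSum m lam := by
  obtain ⟨i, hi⟩ := hpos
  obtain ⟨k, -, hk⟩ := exists_max_image univ m ⟨i, mem_univ i⟩
  set M := m k
  set S := ∑ i, |m i| with hS_def
  have hM : 0 < M := hi.trans_le (hk i (mem_univ i))
  have hMS : M ≤ S := (le_abs_self M).trans (single_le_sum (fun i _ => abs_nonneg (m i)) (mem_univ k))
  have hS : 0 < S := hM.trans_le hMS
  set lam := 1 / S - 1 / M with hlam_def
  have hlam : lam ≤ 0 := sub_nonpos.2 (one_div_le_one_div_of_le hM hMS)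
  have hdom : lam ∈ multiplierDomain m := by
    intro j
    rcases le_or_gt (m j) 0 with hj | hj
    · nlinarith
    · have hsplit : 1 + lam * m j = (1 - m j / M) + m j / S := by ring
      have : m j / M ≤ 1 := (div_le_one hM).2 (hk j (mem_univ j))
      linarith [div_pos hj hS]
  have hterm : m k / (1 + lam * m k) = S := by
    have hden : 1 + lam * M = M / S := by
      rw [hlam_def]
      field_simp
      ring
    rw [hden, div_div_cancel₀ hM.ne']
  have key := single_le_sum (f := fun j => m j / (1 + lam * m j) + |m j|)
    (fun j _ => neg_le_iff_add_nonneg.1 (neg_abs_le_div_one_add_mul hlam (hdom j))) (mem_univ k)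
  rw [hterm, sum_add_distrib, ← hS_def] at key
  exact ⟨lam, hdom, by unfold multiplierSum; linarith [abs_pos.2 hM.ne']⟩

theorem exists_mem_multiplierDomain_multiplierSum_neg {m : ι → ℝ} (hneg : ∃ i, m i < 0) :
    ∃ lam ∈ multiplierDomain m, multiplierSum m lam < 0 := by
  obtain ⟨lam, hlam, hsum⟩ :=
    exists_mem_multiplierDomain_multiplierSum_pos (m := -m) (by simpa using hneg)
  refine ⟨-lam, neg_mem_multiplierDomain_neg.1 (by rwa [neg_neg]), ?_⟩
  have := multiplierSum_neg m (-lam)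
  rw [neg_neg] at this
  linarith

theorem exists_multiplierSum_eq_zero {m : ι → ℝ} (hpos : ∃ i, 0 < m i) (hneg : ∃ i, m i < 0) :
    ∃ lam ∈ multiplierDomain m, multiplierSum m lam = 0 := by
  obtain ⟨a, ha, hfa⟩ := exists_mem_multiplierDomain_multiplierSum_neg hneg
  obtain ⟨b, hb, hfb⟩ := exists_mem_multiplierDomain_multiplierSum_pos hpos
  exact (ordConnected_multiplierDomain m).isPreconnected.intermediate_value ha hb
    (continuousOn_multiplierSum m) ⟨hfa.le, hfb.le⟩

end EmpiricalLikelihood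

theorem empirical_likelihood_multiplier_exists_unique_general
    (n : ℕ) (m : Fin n → ℝ)
    (hposval : ∃ i, 0 < m i) (hnegval : ∃ j, m j < 0) :
    ∃! lam : ℝ, (∀ i, 0 < 1 + lam * m i) ∧ ∑ i, m i / (1 + lam * m i) = 0 := by
  obtain ⟨lam, hdom, hsum⟩ := EmpiricalLikelihood.exists_multiplierSum_eq_zero hposval hnegval
  have hm : ∃ i, m i ≠ 0 := hposval.imp fun _ h => h.ne'
  exact ⟨lam, ⟨hdom, hsum⟩, fun mu hmu =>
    (EmpiricalLikelihood.strictAntiOn_multiplierSum hm).injOn hmu.1 hdom (hmu.2.trans hsum.symm)⟩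

/-- Existence and uniqueness of the Lagrange multiplier in the profile
empirical likelihood solution: if the estimating-function values `m i` take
both positive and negative values, there is exactly one `λ` with all
denominators `1 + λ·m i` strictly positive and
`∑ i, m i / (1 + λ·m i) = 0`. -/
theorem empirical_likelihood_multiplier_exists_unique
    (n : ℕ) (hn : 0 < n) (m : Fin n → ℝ)
    (hposval : ∃ i, 0 < m i) (hnegval : ∃ j, m j < 0) :
    ∃! lam : ℝ, (∀ i, 0 < 1 + lam * m i) ∧ ∑ i, m i / (1 + lam * m i) = 0 :=
  empirical_likelihood_multiplier_exists_unique_general n m hposval hnegval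
end
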